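/- arXiv:2402.00382 — 4 statements merged into one kernel-verified Lean document; each statement's English description precedes it below -/
import Mathlib

section
/- Let n = d ≥ 2, B = √n, σ = R = 1, and p ∈ (0,1]. Then sup over X ∈ 𝒳_{n,n}(√n) and over θ* ∈ ℝ^n with ‖θ*‖_p ≤ 1 of E_{y ~ N(Xθ*, I_n)}[ inf_{λ > 0} ‖θ̂_λ(X,y) − θ*‖₂² ] ≥ 9/20000. -/
/-!
Take θ* = e₀ and the diagonal design X = diag(n^{1/4}, √n, …, √n), which lies in 𝒳_{n,n}(√n)
with equality in the first coordinate. For a diagonal design the Lasso decouples: its k-th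
coordinate minimizes (s - y_k / X_kk)² + 2 (nλ / X_kk²) |s|, i.e. it soft-thresholds y_k / X_kk
at level nλ / X_kk². If λ√n ≥ 1/2 the signal coordinate is thresholded at level at least 1/2,
so on {y₀ ≤ n^{1/4}} its estimate is at most 1/2 and the error is at least 1/4. If λ√n ≤ 1/2,
each noise coordinate with y_j ≥ 1 survives with value at least 1/(2√n) and costs 1/(4n).
Either way, for every λ the error is at least (1/(4n)) · #{j ≠ 0 : y₀ ≤ n^{1/4}, y_j ≥ 1},
and by independence each of these n - 1 events has probability at least (1/6) · (1/27),
so the expected oracle error is at least (n - 1) / (648 n) ≥ 1/1296.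
-/

open MeasureTheory ProbabilityTheory Matrix
open scoped ENNReal NNReal

/-- The Gaussian noise distribution: `y` has independent coordinates
`y i ~ N(mean i, sd²)`. -/
noncomputable def noise {m : ℕ} (mean : Fin m → ℝ) (sd : ℝ) :
    Measure (Fin m → ℝ) :=
  Measure.pi fun i => gaussianReal (mean i) (Real.toNNReal (sd ^ 2))

/-- The design class `𝒳_{n,d}(B)`: matrices with `(1/n) Xᵀ X ⪰ (1/B) I_d`. -/
def designClass (n d : ℕ) (B : ℝ) : Set (Matrix (Fin n) (Fin d) ℝ) :=
  {X | ((n : ℝ)⁻¹ • (Xᵀ * X) - B⁻¹ • (1 : Matrix (Fin d) (Fin d) ℝ)).PosSemidef}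

/-- The Lasso objective `(1/n)‖Xϑ − y‖₂² + 2λ‖ϑ‖₁`. -/
noncomputable def lassoObj (n d : ℕ) (lam : ℝ) (X : Matrix (Fin n) (Fin d) ℝ)
    (y : Fin n → ℝ) (t : Fin d → ℝ) : ℝ :=
  (n : ℝ)⁻¹ * ∑ j, (X.mulVec t j - y j) ^ 2 + 2 * lam * ∑ i, |t i|

open Set

theorem Finset.apply_le_of_forall_sum_le {ι β M : Type*} [Fintype ι] [DecidableEq ι]
    [AddCommMonoid M] [PartialOrder M] [IsOrderedCancelAddMonoid M]
    {f : ι → β → M} {t : ι → β} (h : ∀ u : ι → β, ∑ k, f k (t k) ≤ ∑ k, f k (u k))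
    (k : ι) (s : β) : f k (t k) ≤ f k s := by
  have h_update := h (Function.update t k s)
  simp_rw [Function.apply_update (fun k => f k)] at h_update
  rw [Finset.sum_update_of_mem (Finset.mem_univ k),
    ← Finset.add_sum_erase _ _ (Finset.mem_univ k), Finset.sdiff_singleton_eq_erase] at h_update
  exact le_of_add_le_add_right h_update

theorem sum_abs_single_rpow {ι : Type*} [Fintype ι] [DecidableEq ι] (k : ι) (a : ℝ) {p : ℝ}
    (hp : p ≠ 0) : ∑ i, |(Pi.single k a : ι → ℝ) i| ^ p = |a| ^ p := by
  rw [Fintype.sum_eq_single k fun i hi => by simp [Pi.single_eq_of_ne hi, Real.zero_rpow hp],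
    Pi.single_eq_same]

theorem MeasureTheory.Measure.pi_setOf_mem_and_mem {ι α : Type*} [Fintype ι]
    [MeasurableSpace α] {μ : ι → Measure α} [∀ i, IsProbabilityMeasure (μ i)] {i j : ι}
    (hij : i ≠ j) {S T : Set α} (hS : MeasurableSet S) (hT : MeasurableSet T) :
    Measure.pi μ {y | y i ∈ S ∧ y j ∈ T} = μ i S * μ j T := by
  have hind : IndepFun (fun y : ι → α => y i) (fun y => y j) (Measure.pi μ) :=
    (iIndepFun_pi (X := fun _ => id) fun _ => aemeasurable_id).indepFun hij
  rw [← (measurePreserving_eval μ i).measure_preimage hS.nullMeasurableSet,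
    ← (measurePreserving_eval μ j).measure_preimage hT.nullMeasurableSet]
  exact hind.measure_inter_preimage_eq_mul S T hS hT

theorem one_div_three_le_inv_sqrt_two_pi : (1 / 3 : ℝ) ≤ (√(2 * Real.pi))⁻¹ := by
  rw [one_div, inv_le_inv₀ (by norm_num) (by positivity), Real.sqrt_le_left (by norm_num)]
  nlinarith [Real.pi_le_four]

theorem le_gaussianPDFReal_one {m x M : ℝ} (h : (x - m) ^ 2 ≤ M) :
    (√(2 * Real.pi))⁻¹ * Real.exp (-M / 2) ≤ gaussianPDFReal m 1 x := by
  rw [gaussianPDFReal, NNReal.coe_one, mul_one, mul_one]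
  gcongr

theorem ofReal_le_gaussianReal_one_Icc {m a b M : ℝ} (hM : ∀ x ∈ Icc a b, (x - m) ^ 2 ≤ M) :
    ENNReal.ofReal ((b - a) * ((√(2 * Real.pi))⁻¹ * Real.exp (-M / 2))) ≤
      gaussianReal m 1 (Icc a b) := by
  rw [gaussianReal_apply m one_ne_zero, ENNReal.ofReal_mul' (by positivity), ← Real.volume_Icc,
    mul_comm, ← setLIntegral_const]
  exact setLIntegral_mono' measurableSet_Icc fun x hx =>
    ENNReal.ofReal_le_ofReal (le_gaussianPDFReal_one (hM x hx))

theorem ofReal_le_gaussianReal_one_Iic_self (m : ℝ) :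
    ENNReal.ofReal (1 / 6) ≤ gaussianReal m 1 (Iic m) := by
  refine le_trans ?_ ((ofReal_le_gaussianReal_one_Icc (a := m - 1) (b := m) (M := 1)
    fun x hx => ?_).trans (measure_mono Icc_subset_Iic_self))
  · refine ENNReal.ofReal_le_ofReal ?_
    nlinarith [one_div_three_le_inv_sqrt_two_pi, Real.add_one_le_exp (-1 / 2)]
  · nlinarith [hx.1, hx.2]

theorem ofReal_le_gaussianReal_zero_one_Ici_one :
    ENNReal.ofReal (1 / 27) ≤ gaussianReal 0 1 (Ici 1) := by
  refine le_trans ?_ ((ofReal_le_gaussianReal_one_Icc (a := 1) (b := 2) (M := 4)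
    fun x hx => ?_).trans (measure_mono Icc_subset_Ici_self))
  · refine ENNReal.ofReal_le_ofReal ?_
    have h : Real.exp (-4 / 2) = Real.exp (-1) ^ 2 := by rw [← Real.exp_nat_mul]; norm_num
    nlinarith [one_div_three_le_inv_sqrt_two_pi, Real.exp_neg_one_gt_d9]
  · nlinarith [hx.1, hx.2]

def softThresholdObj (z τ s : ℝ) : ℝ := (s - z) ^ 2 + 2 * τ * |s|

theorem eq_sub_of_isMinOn_softThresholdObj {z τ t : ℝ} (hτ : 0 ≤ τ) (hτz : τ ≤ z)
    (ht : IsMinOn (softThresholdObj z τ) univ t) : t = z - τ := by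
  have h := isMinOn_univ_iff.1 ht (z - τ)
  simp only [softThresholdObj, abs_of_nonneg (sub_nonneg.2 hτz)] at h
  nlinarith [mul_le_mul_of_nonneg_left (le_abs_self t) hτ, sq_nonneg (t - z + τ)]

theorem le_max_of_isMinOn_softThresholdObj {z τ t : ℝ} (hτ : 0 ≤ τ)
    (ht : IsMinOn (softThresholdObj z τ) univ t) : t ≤ max (z - τ) 0 := by
  rcases le_or_gt τ z with hτz | hzτ
  · exact (eq_sub_of_isMinOn_softThresholdObj hτ hτz ht).le.trans (le_max_left _ _)
  · refine le_max_of_le_right (not_lt.1 fun htpos => ?_)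
    have h := isMinOn_univ_iff.1 ht 0
    simp only [softThresholdObj, abs_of_pos htpos, abs_zero] at h
    nlinarith [mul_pos htpos (sub_pos.2 hzτ)]

theorem lassoObj_diagonal {n : ℕ} (lam : ℝ) (c y t : Fin n → ℝ) :
    lassoObj n n lam (diagonal c) y t =
      ∑ k, ((n : ℝ)⁻¹ * (c k * t k - y k) ^ 2 + 2 * lam * |t k|) := by
  simp only [lassoObj, mulVec_diagonal, Finset.sum_add_distrib, Finset.mul_sum]

theorem inv_mul_sq_add_mul_abs_eq_softThresholdObj {N c : ℝ} (hN : N ≠ 0) (hc : c ≠ 0)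
    (lam y s : ℝ) :
    N⁻¹ * (c * s - y) ^ 2 + 2 * lam * |s| =
      c ^ 2 / N * softThresholdObj (y / c) (N * lam / c ^ 2) s := by
  unfold softThresholdObj
  field_simp

theorem isMinOn_softThresholdObj_of_lassoObj_diagonal {n : ℕ} {lam : ℝ} {c y t : Fin n → ℝ}
    (ht : IsMinOn (lassoObj n n lam (diagonal c) y) univ t) {k : Fin n} (hck : c k ≠ 0) :
    IsMinOn (softThresholdObj (y k / c k) (n * lam / c k ^ 2)) univ (t k) := by
  have hn : (n : ℝ) ≠ 0 := Nat.cast_ne_zero.2 k.pos.ne'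
  refine isMinOn_univ_iff.2 fun s => le_of_mul_le_mul_left ?_ (by positivity : 0 < c k ^ 2 / n)
  simp only [← inv_mul_sq_add_mul_abs_eq_softThresholdObj hn hck]
  refine Finset.apply_le_of_forall_sum_le
    (f := fun k s => (n : ℝ)⁻¹ * (c k * s - y k) ^ 2 + 2 * lam * |s|) (fun u => ?_) k s
  simpa only [lassoObj_diagonal] using isMinOn_univ_iff.1 ht u

theorem diagonal_mem_designClass {n : ℕ} {B : ℝ} {c : Fin n → ℝ}
    (hc : ∀ i, B⁻¹ ≤ (n : ℝ)⁻¹ * c i ^ 2) : diagonal c ∈ designClass n n B := by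
  have h : (n : ℝ)⁻¹ • ((diagonal c)ᵀ * diagonal c) - B⁻¹ • (1 : Matrix (Fin n) (Fin n) ℝ) =
      diagonal fun i => (n : ℝ)⁻¹ * c i ^ 2 - B⁻¹ := by
    rw [diagonal_transpose, diagonal_mul_diagonal, ← diagonal_one, ← diagonal_smul,
      ← diagonal_smul, diagonal_sub]
    simp [sq]
  show PosSemidef _
  rw [h, posSemidef_diagonal_iff]
  exact fun i => sub_nonneg.2 (hc i)

noncomputable def spikeDesign (n : ℕ) [NeZero n] (w : ℝ) : Matrix (Fin n) (Fin n) ℝ :=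
  diagonal (Function.update (fun _ => w) 0 (√w))

section Spike

variable {n : ℕ} [NeZero n]

def spikeEvent (w : ℝ) (j : Fin n) : Set (Fin n → ℝ) := {y | y 0 ≤ √w ∧ 1 ≤ y j}

theorem measurableSet_spikeEvent (w : ℝ) (j : Fin n) : MeasurableSet (spikeEvent w j) :=
  (measurableSet_le (measurable_pi_apply 0) measurable_const).inter
    (measurableSet_le measurable_const (measurable_pi_apply j))

theorem spikeDesign_mem_designClass {w : ℝ} (hw : 1 ≤ w) (hn : (n : ℝ) = w ^ 2) :
    spikeDesign n w ∈ designClass n n w := by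
  refine diagonal_mem_designClass fun i => ?_
  rcases eq_or_ne i 0 with rfl | hi
  · rw [Function.update_self, Real.sq_sqrt (by linarith), hn]
    field_simp
    rfl
  · rw [Function.update_of_ne hi, hn, inv_mul_cancel₀ (by positivity)]
    exact inv_le_one_of_one_le₀ hw

theorem spikeDesign_mulVec_single (w : ℝ) :
    spikeDesign n w *ᵥ Pi.single 0 1 = Pi.single 0 (√w) := by
  ext i
  rcases eq_or_ne i 0 with rfl | hi <;> simp [spikeDesign, mulVec_diagonal, *]

variable {w lam : ℝ} {y t : Fin n → ℝ}

theorem spikeDesign_lasso_noise_coord_sq_ge (hw : 1 ≤ w) (hn : (n : ℝ) = w ^ 2)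
    (hlam : 0 < lam) (hsmall : lam * w ≤ 1 / 2)
    (ht : IsMinOn (lassoObj n n lam (spikeDesign n w) y) univ t)
    {j : Fin n} (hj : j ≠ 0) (hyj : 1 ≤ y j) : (4 * n : ℝ)⁻¹ ≤ t j ^ 2 := by
  have hw0 : 0 < w := by linarith
  have hmin := isMinOn_softThresholdObj_of_lassoObj_diagonal ht (k := j) (by simp [hj]; linarith)
  simp only [Function.update_of_ne hj, hn] at hmin
  rw [show w ^ 2 * lam / w ^ 2 = lam by field_simp] at hmin
  have hlam_le : lam ≤ 1 / (2 * w) := by rw [le_div_iff₀ (by positivity)]; linarith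
  have hyw : 1 / w ≤ y j / w := by gcongr
  have hwinv : 1 / (2 * w) ≤ 1 / w := by gcongr; linarith
  have htj := eq_sub_of_isMinOn_softThresholdObj hlam.le (by linarith) hmin
  have hhalf : 1 / (2 * w) ≤ t j := by
    rw [htj]; field_simp at hyw hlam_le ⊢; linarith
  calc (4 * n : ℝ)⁻¹ = (1 / (2 * w)) ^ 2 := by rw [hn]; field_simp; ring
    _ ≤ t j ^ 2 := pow_le_pow_left₀ (by positivity) hhalf 2

theorem spikeDesign_lasso_signal_coord_le_half (hw : 1 ≤ w) (hn : (n : ℝ) = w ^ 2)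
    (hlarge : 1 / 2 ≤ lam * w) (ht : IsMinOn (lassoObj n n lam (spikeDesign n w) y) univ t)
    (hy0 : y 0 ≤ √w) : t 0 ≤ 1 / 2 := by
  have hw0 : 0 < √w := Real.sqrt_pos.2 (by linarith)
  have hmin := isMinOn_softThresholdObj_of_lassoObj_diagonal ht (k := 0) (by simp; linarith)
  simp only [Function.update_self, hn, Real.sq_sqrt (by linarith : 0 ≤ w)] at hmin
  rw [show w ^ 2 * lam / w = lam * w by field_simp] at hmin
  have hz : y 0 / √w ≤ 1 := (div_le_one hw0).2 hy0
  exact (le_max_of_isMinOn_softThresholdObj (by linarith) hmin).trans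
    (max_le (by linarith) (by norm_num))

theorem sum_indicator_spikeEvent_le_sq_error (hw : 1 ≤ w) (hn : (n : ℝ) = w ^ 2)
    (hlam : 0 < lam) (ht : IsMinOn (lassoObj n n lam (spikeDesign n w) y) univ t) :
    ∑ j ∈ Finset.univ.erase 0, (spikeEvent w j).indicator (fun _ => (4 * n : ℝ)⁻¹) y ≤
      ∑ i, (t i - (Pi.single 0 1 : Fin n → ℝ) i) ^ 2 := by
  by_cases hy0 : y 0 ≤ √w
  swap
  · rw [Finset.sum_eq_zero fun j _ => indicator_of_notMem (fun hy => hy0 hy.1) _]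
    exact Finset.sum_nonneg fun i _ => sq_nonneg _
  rcases le_total (lam * w) (1 / 2) with hsmall | hlarge
  · calc _ ≤ ∑ j ∈ Finset.univ.erase 0, (t j - (Pi.single 0 1 : Fin n → ℝ) j) ^ 2 := by
          refine Finset.sum_le_sum fun j hj => ?_
          have hj0 := Finset.ne_of_mem_erase hj
          rw [Pi.single_eq_of_ne hj0, sub_zero]
          by_cases hyj : 1 ≤ y j
          · rw [indicator_of_mem (show y ∈ spikeEvent w j from ⟨hy0, hyj⟩)]
            exact spikeDesign_lasso_noise_coord_sq_ge hw hn hlam hsmall ht hj0 hyj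
          · rw [indicator_of_notMem fun hy => hyj hy.2]
            exact sq_nonneg _
      _ ≤ _ := Finset.sum_le_sum_of_subset_of_nonneg (Finset.subset_univ _)
          fun i _ _ => sq_nonneg _
  · have ht0 := spikeDesign_lasso_signal_coord_le_half hw hn hlarge ht hy0
    calc _ ≤ ∑ _j ∈ Finset.univ.erase (0 : Fin n), (4 * n : ℝ)⁻¹ :=
          Finset.sum_le_sum fun j _ => indicator_le_self' (fun _ _ => by positivity) y
      _ ≤ 1 / 4 := by
          rw [Finset.sum_const, nsmul_eq_mul, Finset.card_erase_of_mem (Finset.mem_univ 0),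
            Finset.card_univ, Fintype.card_fin, ← div_eq_mul_inv,
            div_le_iff₀ (by simp [NeZero.pos n])]
          have : ((n - 1 : ℕ) : ℝ) ≤ n := by exact_mod_cast n.sub_le 1
          linarith
      _ ≤ (t 0 - (Pi.single 0 1 : Fin n → ℝ) 0) ^ 2 := by rw [Pi.single_eq_same]; nlinarith
      _ ≤ _ := Finset.single_le_sum (f := fun i => (t i - (Pi.single 0 1 : Fin n → ℝ) i) ^ 2)
          (fun i _ => sq_nonneg _) (Finset.mem_univ 0)

theorem noise_spikeEvent (w : ℝ) {j : Fin n} (hj : j ≠ 0) :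
    noise (Pi.single 0 (√w)) 1 (spikeEvent w j) =
      gaussianReal (√w) 1 (Iic (√w)) * gaussianReal 0 1 (Ici 1) := by
  have h := Measure.pi_setOf_mem_and_mem
    (μ := fun i : Fin n => gaussianReal ((Pi.single 0 (√w) : Fin n → ℝ) i) 1)
    hj.symm (measurableSet_Iic (a := √w)) (measurableSet_Ici (a := (1 : ℝ)))
  simpa [noise, spikeEvent, Pi.single_eq_of_ne hj] using h

theorem ofReal_le_lintegral_noise_spike (hn : 2 ≤ n) (w : ℝ) {f : (Fin n → ℝ) → ℝ}
    (hf : ∀ y, ∑ j ∈ Finset.univ.erase 0, (spikeEvent w j).indicator (fun _ => (4 * n : ℝ)⁻¹) y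
      ≤ f y) :
    ENNReal.ofReal (9 / 20000) ≤ ∫⁻ y, ENNReal.ofReal (f y) ∂noise (Pi.single 0 (√w)) 1 := by
  set c := ENNReal.ofReal (4 * n : ℝ)⁻¹
  have hA : ∀ j ∈ Finset.univ.erase (0 : Fin n),
      ENNReal.ofReal (1 / 162) ≤ noise (Pi.single 0 (√w)) 1 (spikeEvent w j) := by
    intro j hj
    rw [noise_spikeEvent w (Finset.ne_of_mem_erase hj), show (1 / 162 : ℝ) = 1 / 6 * (1 / 27) by
      norm_num, ENNReal.ofReal_mul (by norm_num)]
    exact mul_le_mul' (ofReal_le_gaussianReal_one_Iic_self _)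
      ofReal_le_gaussianReal_zero_one_Ici_one
  calc ENNReal.ofReal (9 / 20000)
      ≤ ∑ _j ∈ Finset.univ.erase (0 : Fin n), c * ENNReal.ofReal (1 / 162) := by
        rw [Finset.sum_const, Finset.card_erase_of_mem (Finset.mem_univ 0), Finset.card_univ,
          Fintype.card_fin, nsmul_eq_mul, ← ENNReal.ofReal_natCast, ← ENNReal.ofReal_mul
          (by positivity), ← ENNReal.ofReal_mul (by positivity)]
        refine ENNReal.ofReal_le_ofReal ?_
        have hn' : (2 : ℝ) ≤ n := by exact_mod_cast hn
        rw [Nat.cast_sub (by omega), Nat.cast_one]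
        field_simp
        linarith
    _ ≤ ∑ j ∈ Finset.univ.erase 0, c * noise (Pi.single 0 (√w)) 1 (spikeEvent w j) :=
        Finset.sum_le_sum fun j hj => by gcongr; exact hA j hj
    _ = ∫⁻ y, ∑ j ∈ Finset.univ.erase 0, (spikeEvent w j).indicator (fun _ => c) y
          ∂noise (Pi.single 0 (√w)) 1 := by
        rw [lintegral_finsetSum _ fun (j : Fin n) _ => measurable_const.indicator
          (measurableSet_spikeEvent w j)]
        exact Finset.sum_congr rfl fun j _ =>
          (lintegral_indicator_const (measurableSet_spikeEvent w j) c).symm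
    _ ≤ ∫⁻ y, ENNReal.ofReal (f y) ∂noise (Pi.single 0 (√w)) 1 := by
        refine lintegral_mono fun y => le_trans (le_of_eq ?_) (ENNReal.ofReal_le_ofReal (hf y))
        rw [ENNReal.ofReal_sum_of_nonneg fun j _ => indicator_nonneg (fun _ _ => by positivity) y]
        refine Finset.sum_congr rfl fun j _ => ?_
        by_cases hy : y ∈ spikeEvent w j <;> simp [hy, c]

end Spike

theorem lasso_suboptimal_weakly_sparse_general (n : ℕ) (hn : 2 ≤ n) (p : ℝ)
    (hp : 0 < p)
    (lasso : ℝ → Matrix (Fin n) (Fin n) ℝ → (Fin n → ℝ) → Fin n → ℝ)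
    (hlasso : ∀ lam : ℝ, 0 < lam → ∀ X y t,
      lassoObj n n lam X y (lasso lam X y) ≤ lassoObj n n lam X y t) :
    ENNReal.ofReal (9 / 20000) ≤
      ⨆ X : designClass n n (Real.sqrt n),
        ⨆ θ : {θ : Fin n → ℝ // ∑ i, |θ i| ^ p ≤ 1},
          ∫⁻ y, ENNReal.ofReal
              (⨅ lam : Set.Ioi (0 : ℝ), ∑ i, (lasso lam.1 X.1 y i - θ.1 i) ^ 2)
            ∂ noise (X.1.mulVec θ.1) 1 := by
  have : NeZero n := ⟨by omega⟩
  have hw : 1 ≤ √(n : ℝ) := Real.one_le_sqrt.2 (by exact_mod_cast (by omega : 1 ≤ n))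
  have hnw : (n : ℝ) = √(n : ℝ) ^ 2 := (Real.sq_sqrt n.cast_nonneg).symm
  have hθ : ∑ i, |(Pi.single 0 1 : Fin n → ℝ) i| ^ p ≤ 1 := by
    rw [sum_abs_single_rpow _ _ hp.ne', abs_one, Real.one_rpow]
  refine le_iSup_of_le ⟨spikeDesign n √n, spikeDesign_mem_designClass hw hnw⟩
    (le_iSup_of_le ⟨Pi.single 0 1, hθ⟩ ?_)
  rw [spikeDesign_mulVec_single]
  exact ofReal_le_lintegral_noise_spike hn _ fun y => le_ciInf fun lam =>
    sum_indicator_spikeEvent_le_sq_error hw hnw lam.2 (isMinOn_univ_iff.2 (hlasso lam.1 lam.2 _ y))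

/-- Corollary 1(a): for `n = d`, `B = √n`, `σ = R = 1` and `p ∈ (0,1]`, the
worst-case risk of the Lasso — even with the oracle choice of the
regularization parameter — is bounded below by the constant `9/20000`. -/
theorem lasso_suboptimal_weakly_sparse (n : ℕ) (hn : 2 ≤ n) (p : ℝ)
    (hp : 0 < p) (hp1 : p ≤ 1)
    (lasso : ℝ → Matrix (Fin n) (Fin n) ℝ → (Fin n → ℝ) → Fin n → ℝ)
    (hlasso : ∀ lam : ℝ, 0 < lam → ∀ X y t,
      lassoObj n n lam X y (lasso lam X y) ≤ lassoObj n n lam X y t) :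
    ENNReal.ofReal (9 / 20000) ≤
      ⨆ X : designClass n n (Real.sqrt n),
        ⨆ θ : {θ : Fin n → ℝ // ∑ i, |θ i| ^ p ≤ 1},
          ∫⁻ y, ENNReal.ofReal
              (⨅ lam : Set.Ioi (0 : ℝ), ∑ i, (lasso lam.1 X.1 y i - θ.1 i) ^ 2)
            ∂ noise (X.1.mulVec θ.1) 1 :=
  lasso_suboptimal_weakly_sparse_general n hn p hp lasso hlasso
end

section
/- Let d ≥ 1, p ∈ (0,1], R > 0, and ζ > 0. Then sup over θ ∈ ℝ^d with ‖θ‖_p ≤ R of Σ_{i=1}^d min(θ_i², ζ²) ≤ R² · min( (ζ/R)²·d, (ζ/R)^{2−p}, 1 ). -/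
/-!
Each term satisfies `min (θᵢ², c²) = m² = m^p m^(2-p) ≤ |θᵢ|^p c^(2-p)` with `m = min (|θᵢ|, c)`.
Summing with `c = ζ` gives the bound `ζ^(2-p) R^p`, and with `c = R` (every `|θᵢ| ≤ R` on the
`ℓ_p` ball) the bound `R²`; the bound `d ζ²` is termwise.
-/

open Real Finset

section

variable {p c : ℝ}

lemma min_sq_sq_eq_min_abs_sq (x : ℝ) (hc : 0 ≤ c) : min (x ^ 2) (c ^ 2) = min |x| c ^ 2 := by
  rw [← sq_abs x]
  rcases le_total |x| c with h | h
  · rw [min_eq_left h, min_eq_left (pow_le_pow_left₀ (abs_nonneg x) h 2)]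
  · rw [min_eq_right h, min_eq_right (pow_le_pow_left₀ hc h 2)]

lemma min_sq_sq_le_abs_rpow_mul_rpow (hp0 : 0 ≤ p) (hp2 : p ≤ 2) (x : ℝ) (hc : 0 ≤ c) :
    min (x ^ 2) (c ^ 2) ≤ |x| ^ p * c ^ (2 - p) := by
  have hm : 0 ≤ min |x| c := le_min (abs_nonneg x) hc
  calc min (x ^ 2) (c ^ 2) = min |x| c ^ (p + (2 - p)) := by
        rw [min_sq_sq_eq_min_abs_sq x hc, add_sub_cancel, ← rpow_natCast]
        norm_num
    _ = min |x| c ^ p * min |x| c ^ (2 - p) := rpow_add' hm (by norm_num)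
    _ ≤ |x| ^ p * c ^ (2 - p) := mul_le_mul (rpow_le_rpow hm (min_le_left _ _) hp0)
        (rpow_le_rpow hm (min_le_right _ _) (by linarith)) (by positivity) (by positivity)

variable {ι : Type*} [Fintype ι]

lemma sum_min_sq_le_sum_rpow_mul (hp0 : 0 ≤ p) (hp2 : p ≤ 2) (θ : ι → ℝ) (hc : 0 ≤ c) :
    ∑ i, min (θ i ^ 2) (c ^ 2) ≤ (∑ i, |θ i| ^ p) * c ^ (2 - p) := by
  rw [sum_mul]
  exact sum_le_sum fun i _ ↦ min_sq_sq_le_abs_rpow_mul_rpow hp0 hp2 (θ i) hc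

lemma abs_le_of_sum_rpow_le {R : ℝ} (hp : 0 < p) (hR : 0 ≤ R) {θ : ι → ℝ}
    (hθ : ∑ i, |θ i| ^ p ≤ R ^ p) (i : ι) : |θ i| ≤ R := by
  refine (rpow_le_rpow_iff (abs_nonneg _) hR hp).mp (le_trans ?_ hθ)
  exact single_le_sum (f := fun j ↦ |θ j| ^ p) (fun j _ ↦ by positivity) (mem_univ i)

lemma sum_min_sq_le_of_sum_rpow_le {R : ℝ} (hp : 0 < p) (hp2 : p ≤ 2) (hR : 0 ≤ R) (hc : 0 ≤ c)
    {θ : ι → ℝ} (hθ : ∑ i, |θ i| ^ p ≤ R ^ p) :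
    ∑ i, min (θ i ^ 2) (c ^ 2) ≤
      min (c ^ 2 * Fintype.card ι) (min (c ^ (2 - p) * R ^ p) (R ^ 2)) := by
  refine le_min ?_ (le_min ?_ ?_)
  · calc ∑ i, min (θ i ^ 2) (c ^ 2) ≤ ∑ _i : ι, c ^ 2 := sum_le_sum fun i _ ↦ min_le_right _ _
      _ = c ^ 2 * Fintype.card ι := by simp [mul_comm]
  · calc ∑ i, min (θ i ^ 2) (c ^ 2) ≤ (∑ i, |θ i| ^ p) * c ^ (2 - p) :=
          sum_min_sq_le_sum_rpow_mul hp.le hp2 θ hc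
      _ ≤ R ^ p * c ^ (2 - p) := by gcongr
      _ = c ^ (2 - p) * R ^ p := mul_comm _ _
  · have hθR (i : ι) : min (θ i ^ 2) (R ^ 2) = θ i ^ 2 :=
      min_eq_left <| sq_le_sq.mpr <| by
        rw [abs_of_nonneg hR]
        exact abs_le_of_sum_rpow_le hp hR hθ i
    calc ∑ i, min (θ i ^ 2) (c ^ 2) ≤ ∑ i, min (θ i ^ 2) (R ^ 2) := by
          simp only [hθR]
          exact sum_le_sum fun i _ ↦ min_le_left _ _
      _ ≤ (∑ i, |θ i| ^ p) * R ^ (2 - p) := sum_min_sq_le_sum_rpow_mul hp.le hp2 θ hR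
      _ ≤ R ^ p * R ^ (2 - p) := by gcongr
      _ = R ^ 2 := by
          rw [← rpow_add' hR (by norm_num), add_sub_cancel, ← rpow_natCast]
          norm_num

end

theorem sum_min_sq_le_weakly_sparse_general (d : ℕ) (p R ζ : ℝ)
    (hp : 0 < p) (hp1 : p ≤ 1) (hR : 0 < R) (hζ : 0 < ζ) :
    (⨆ θ : {θ : Fin d → ℝ // ∑ i, |θ i| ^ p ≤ R ^ p}, ∑ i, min (θ.1 i ^ 2) (ζ ^ 2)) ≤
      R ^ 2 * min ((ζ / R) ^ 2 * d) (min ((ζ / R) ^ (2 - p)) 1) := by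
  have hRHS : R ^ 2 * min ((ζ / R) ^ 2 * d) (min ((ζ / R) ^ (2 - p)) 1) =
      min (ζ ^ 2 * d) (min (ζ ^ (2 - p) * R ^ p) (R ^ 2)) := by
    have hmid : R ^ 2 * (ζ / R) ^ (2 - p) = ζ ^ (2 - p) * R ^ p := by
      rw [div_rpow hζ.le hR.le, ← rpow_natCast, ← sub_add_cancel ((2 : ℕ) : ℝ) p, rpow_add hR]
      field_simp
      norm_num
    rw [mul_min_of_nonneg _ _ (by positivity), mul_min_of_nonneg _ _ (by positivity), hmid]
    field_simp
  rw [hRHS]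
  refine Real.iSup_le (fun θ ↦ ?_) (by positivity)
  simpa using sum_min_sq_le_of_sum_rpow_le hp (by linarith) hR.le hζ.le θ.2

/-- Lemma 2(a): bound on `sup_{‖θ‖_p ≤ R} Σᵢ min(θᵢ², ζ²)` for `p ∈ (0,1]`. -/
theorem sum_min_sq_le_weakly_sparse (d : ℕ) (hd : 1 ≤ d) (p R ζ : ℝ)
    (hp : 0 < p) (hp1 : p ≤ 1) (hR : 0 < R) (hζ : 0 < ζ) :
    (⨆ θ : {θ : Fin d → ℝ // ∑ i, |θ i| ^ p ≤ R ^ p}, ∑ i, min (θ.1 i ^ 2) (ζ ^ 2)) ≤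
      R ^ 2 * min ((ζ / R) ^ 2 * d) (min ((ζ / R) ^ (2 - p)) 1) :=
  sum_min_sq_le_weakly_sparse_general d p R ζ hp hp1 hR hζ
end

section
/- Let k ≥ 1, σ, B > 0, n ≥ 1, α ≥ 1, and set λ̄ = √(σ²α/(nB)). Then for every z ∈ ℝ^k: inf over λ ∈ (0, λ̄] of Σ_{i=1}^k (S_{λB/α}(z_i))² ≥ (1/4)·(σ²B/(nα)) · #{ i ∈ {1,…,k} : |z_i| / √(σ²B/(nα)) ≥ 3/2 }. -/
noncomputable def soft (η v : ℝ) : ℝ := Real.sign v * max (|v| - η) 0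

/-! With `τ = √(σ²B/(nα))`, the choice `λ̄ = √(σ²α/(nB))` makes `λ̄ B / α = τ`, so every admissible
threshold `η = λB/α` lies in `(0, τ]`. An index with `|zᵢ| ≥ 3τ/2` then has `|zᵢ| - η ≥ τ/2`, hence
contributes at least `τ²/4` to the sum. -/

open Finset

lemma abs_soft {η : ℝ} (hη : 0 ≤ η) (v : ℝ) : |soft η v| = max (|v| - η) 0 := by
  rcases eq_or_ne v 0 with rfl | hv
  · simp [soft, hη]
  · rw [soft, abs_mul, abs_of_nonneg (le_max_right (|v| - η) 0)]
    rcases Real.sign_apply_eq_of_ne_zero v hv with h | h <;> simp [h]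

lemma sq_le_sq_soft {η t v : ℝ} (hη : 0 ≤ η) (ht : 0 ≤ t) (hv : η + t ≤ |v|) :
    t ^ 2 ≤ soft η v ^ 2 := by
  rw [← sq_abs (soft η v), abs_soft hη]
  exact pow_le_pow_left₀ ht ((le_sub_iff_add_le'.2 hv).trans (le_max_left _ _)) 2

lemma sq_mul_card_le_sum_sq_soft {ι : Type*} [Fintype ι] {η t : ℝ} {z : ι → ℝ} {s : Finset ι}
    (hη : 0 ≤ η) (ht : 0 ≤ t) (hs : ∀ i ∈ s, η + t ≤ |z i|) :
    t ^ 2 * #s ≤ ∑ i, soft η (z i) ^ 2 :=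
  calc t ^ 2 * #s = ∑ _i ∈ s, t ^ 2 := by rw [sum_const, nsmul_eq_mul, mul_comm]
    _ ≤ ∑ i ∈ s, soft η (z i) ^ 2 := sum_le_sum fun i hi => sq_le_sq_soft hη ht (hs i hi)
    _ ≤ ∑ i, soft η (z i) ^ 2 :=
      sum_le_sum_of_subset_of_nonneg (subset_univ s) fun _ _ _ => sq_nonneg _

lemma Real.sqrt_div_mul_eq_sqrt_mul {r : ℝ} (hr : 0 ≤ r) (a : ℝ) : √(a / r) * r = √(a * r) := by
  rcases hr.eq_or_lt with rfl | hr
  · simp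
  · rw [← Real.sqrt_sq hr.le, ← Real.sqrt_mul' _ (sq_nonneg r), Real.sqrt_sq hr.le]
    congr 1
    field_simp

theorem lasso_T1_lower_bound_general (k n : ℕ)
    (σ B α : ℝ) (hB : 0 < B) (hα : 1 ≤ α) (z : Fin k → ℝ) :
    (1 / 4) * (σ ^ 2 * B / (n * α)) *
        ((Finset.univ.filter fun i : Fin k =>
          3 / 2 ≤ |z i| / Real.sqrt (σ ^ 2 * B / (n * α))).card : ℝ) ≤
      ⨅ lam : Set.Ioc (0 : ℝ) (Real.sqrt (σ ^ 2 * α / (n * B))),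
        ∑ i, soft (lam.1 * B / α) (z i) ^ 2 := by
  set c := σ ^ 2 * B / (n * α)
  have hr : 0 < B / α := div_pos hB (by linarith)
  rcases le_or_gt c 0 with hc | hc
  · exact (mul_nonpos_of_nonpos_of_nonneg (by linarith) (Nat.cast_nonneg _)).trans
      (Real.iInf_nonneg fun _ => sum_nonneg fun _ _ => sq_nonneg _)
  set τ := √c
  have hτ : 0 < τ := Real.sqrt_pos.2 hc
  have hlam_bar : √(σ ^ 2 * α / (n * B)) * (B / α) = τ := by
    rw [show σ ^ 2 * α / (n * B) = σ ^ 2 / n / (B / α) by rw [div_div_eq_mul_div]; ring,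
      Real.sqrt_div_mul_eq_sqrt_mul hr.le]
    congr 1
    ring
  have : Nonempty (Set.Ioc (0 : ℝ) √(σ ^ 2 * α / (n * B))) :=
    ⟨⟨_, pos_of_mul_pos_left (hlam_bar ▸ hτ) hr.le, le_rfl⟩⟩
  refine le_ciInf fun ⟨lam, hlam0, hlam⟩ => ?_
  have hη : lam * B / α ≤ τ := by
    rw [mul_div_assoc, ← hlam_bar]
    gcongr
  calc 1 / 4 * c * _ = (τ / 2) ^ 2 * _ := by rw [div_pow, Real.sq_sqrt hc.le]; ring
    _ ≤ _ := sq_mul_card_le_sum_sq_soft (by positivity) (by positivity) fun i hi => by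
      rw [mem_filter, le_div_iff₀ hτ] at hi
      linarith [hi.2]

/-- Lemma 4 (lower bound on `T₁`): for every `z ∈ ℝᵏ`, the infimum over
`λ ∈ (0, λ̄]` of `Σᵢ S_{λB/α}(zᵢ)²`, where `λ̄ = √(σ²α/(nB))`, is at least
`(1/4)·(σ²B/(nα))` times the number of indices with
`|zᵢ|/√(σ²B/(nα)) ≥ 3/2`. -/
theorem lasso_T1_lower_bound (k n : ℕ) (hk : 1 ≤ k) (hn : 1 ≤ n)
    (σ B α : ℝ) (hσ : 0 < σ) (hB : 0 < B) (hα : 1 ≤ α) (z : Fin k → ℝ) :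
    (1 / 4) * (σ ^ 2 * B / (n * α)) *
        ((Finset.univ.filter fun i : Fin k =>
          3 / 2 ≤ |z i| / Real.sqrt (σ ^ 2 * B / (n * α))).card : ℝ) ≤
      ⨅ lam : Set.Ioc (0 : ℝ) (Real.sqrt (σ ^ 2 * α / (n * B))),
        ∑ i, soft (lam.1 * B / α) (z i) ^ 2 :=
  lasso_T1_lower_bound_general k n σ B α hB hα z
end

section
/- Let k ≥ 1, σ, B > 0, n ≥ 1, α ≥ 1, and set λ̄ = √(σ²α/(nB)). Let η ∈ ℝ^k satisfy 0 ≤ η_i ≤ 2√(σ²Bα/n) for all i ∈ {1,…,k}. Then for every z ∈ ℝ^k: inf over λ ∈ [λ̄, ∞) of Σ_{i=1}^k (S_{λB}(z_i) − η_i)² ≥ (1/4)·Σ_{i=1}^k η_i² · 1{z_i ≤ η_i}. -/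
/-! For `zᵢ ≤ ηᵢ`, soft thresholding can only lower `zᵢ` towards `max (zᵢ - λB) 0`, and every
admissible threshold satisfies `λB ≥ λ̄B = √(σ²Bα/n) ≥ ηᵢ / 2`; hence `S_{λB}(zᵢ) ≤ ηᵢ / 2` and
the `i`-th summand is at least `ηᵢ² / 4`, uniformly in `λ`. -/

lemma soft_le_max_sub (t v : ℝ) : soft t v ≤ max (v - t) 0 := by
  unfold soft
  rcases lt_trichotomy v 0 with hv | rfl | hv
  · rw [Real.sign_of_neg hv]
    linarith [le_max_right (|v| - t) 0, le_max_right (v - t) 0]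
  · simp
  · rw [Real.sign_of_pos hv, one_mul, abs_of_pos hv]

lemma soft_le_half {t e v : ℝ} (he : 0 ≤ e) (ht : e / 2 ≤ t) (hv : v ≤ e) :
    soft t v ≤ e / 2 :=
  (soft_le_max_sub t v).trans (max_le (by linarith) (by linarith))

lemma quarter_mul_sq_indicator_le_sq_soft_sub {t e v : ℝ} (he : 0 ≤ e) (ht : e / 2 ≤ t) :
    1 / 4 * (e ^ 2 * if v ≤ e then 1 else 0) ≤ (soft t v - e) ^ 2 := by
  split_ifs with hv
  · have hs := soft_le_half he ht hv
    nlinarith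
  · simpa using sq_nonneg (soft t v - e)

lemma Real.sqrt_div_mul_mul_self {B : ℝ} (hB : 0 ≤ B) (c n : ℝ) :
    √(c / (n * B)) * B = √(c * B / n) := by
  rcases hB.eq_or_lt with rfl | hB
  · simp
  rw [← Real.sqrt_sq hB.le, ← Real.sqrt_mul' _ (sq_nonneg B), Real.sqrt_sq hB.le]
  congr 1
  field_simp

theorem lasso_T2_lower_bound_general (k n : ℕ)
    (σ B α : ℝ) (hB : 0 < B)
    (η : Fin k → ℝ)
    (hη : ∀ i, 0 ≤ η i ∧ η i ≤ 2 * Real.sqrt (σ ^ 2 * B * α / n))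
    (z : Fin k → ℝ) :
    (1 / 4) * ∑ i, η i ^ 2 * (if z i ≤ η i then (1 : ℝ) else 0) ≤
      ⨅ lam : Set.Ici (Real.sqrt (σ ^ 2 * α / (n * B))),
        ∑ i, (soft (lam.1 * B) (z i) - η i) ^ 2 := by
  have hthreshold : Real.sqrt (σ ^ 2 * α / (n * B)) * B = Real.sqrt (σ ^ 2 * B * α / n) := by
    rw [Real.sqrt_div_mul_mul_self hB.le, mul_right_comm]
  have : Nonempty (Set.Ici (Real.sqrt (σ ^ 2 * α / (n * B)))) := ⟨⟨_, Set.self_mem_Ici⟩⟩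
  refine le_ciInf fun ⟨l, hl⟩ => ?_
  rw [Finset.mul_sum]
  refine Finset.sum_le_sum fun i _ => quarter_mul_sq_indicator_le_sq_soft_sub (hη i).1 ?_
  have hlB := mul_le_mul_of_nonneg_right (Set.mem_Ici.mp hl) hB.le
  linarith [(hη i).2]

/-- Lemma 5 (lower bound on `T₂(η)`): if `0 ≤ ηᵢ ≤ 2√(σ²Bα/n)` for all `i`,
then for every `z ∈ ℝᵏ`, the infimum over `λ ≥ λ̄ = √(σ²α/(nB))` of
`Σᵢ (S_{λB}(zᵢ) − ηᵢ)²` is at least `(1/4)·Σᵢ ηᵢ²·1{zᵢ ≤ ηᵢ}`. -/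
theorem lasso_T2_lower_bound (k n : ℕ) (hk : 1 ≤ k) (hn : 1 ≤ n)
    (σ B α : ℝ) (hσ : 0 < σ) (hB : 0 < B) (hα : 1 ≤ α)
    (η : Fin k → ℝ)
    (hη : ∀ i, 0 ≤ η i ∧ η i ≤ 2 * Real.sqrt (σ ^ 2 * B * α / n))
    (z : Fin k → ℝ) :
    (1 / 4) * ∑ i, η i ^ 2 * (if z i ≤ η i then (1 : ℝ) else 0) ≤
      ⨅ lam : Set.Ici (Real.sqrt (σ ^ 2 * α / (n * B))),
        ∑ i, (soft (lam.1 * B) (z i) - η i) ^ 2 :=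
  lasso_T2_lower_bound_general k n σ B α hB η hη z
end
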